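/- Let X be a compact metric space and G a compact topological group acting continuously on X. If C is a collection of continuous G-invariant functions from X to ℝ that is pairwise X_G discriminating, then the class C^{+2} can universally approximate every continuous G-invariant function on X: for every continuous G-invariant f : X → ℝ and every ε > 0 there exists h ∈ C^{+2} with sup_{x∈X} |f(x) − h(x)| < ε. -/

import Mathlib

/-!
One-hidden-layer ReLU networks in the features of `C` form a vector space, and it contains
`φ ∘ q` whenever `φ` is a one-variable ReLU network and `q` a linear combination of features.
Piecewise-linear interpolation on a fine grid approximates `exp` on the bounded range of `q`,
so every `exp ∘ q` lies in the uniform closure of these networks. Such exponentials are closed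
under multiplication, hence span a subalgebra. It separates any two points that an invariant `f`
separates: those lie in different orbits, so some feature in `C` distinguishes them, and so does
its exponential. Stone–Weierstrass, applied on the quotient of `X` by the fibres of the
subalgebra, then puts `f` in its closure.
-/

/-- Two points lie in the same `G`-orbit. -/
def SameOrbit (G : Type*) {X : Type*} [Group G] [MulAction G X] (x₁ x₂ : X) : Prop :=
  ∃ g : G, g • x₁ = x₂

/-- A function is `G`-invariant. -/
def GInvariant (G : Type*) {X : Type*} [Group G] [MulAction G X] (h : X → ℝ) : Prop :=
  ∀ (g : G) (x : X), h (g • x) = h x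

/-- `IsMLP L k M` says that `M : ℝ^k → ℝ` is a multilayer perceptron with `L` affine
layers whose hidden activations are the ReLU function applied componentwise. -/
def IsMLP : ℕ → (k : ℕ) → ((Fin k → ℝ) → ℝ) → Prop
  | 0, _, _ => False
  | 1, k, M => ∃ (w : Fin k → ℝ) (b : ℝ), M = fun x => (∑ i, w i * x i) + b
  | L + 2, k, M => ∃ (m : ℕ) (W : Matrix (Fin m) (Fin k) ℝ) (b : Fin m → ℝ)
      (M' : (Fin m → ℝ) → ℝ), IsMLP (L + 1) m M' ∧
        M = fun x => M' (fun i => max (W.mulVec x i + b i) 0)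

/-- The class `C^{+L}`: all functions of the form `x ↦ M (f₁ x, …, f_k x)` with
`k` finite, `f₁, …, f_k ∈ C`, and `M` an `L`-layer ReLU MLP. -/
def MLPClass {X : Type*} (L : ℕ) (C : Set (X → ℝ)) : Set (X → ℝ) :=
  { h | ∃ (k : ℕ) (f : Fin k → X → ℝ) (M : (Fin k → ℝ) → ℝ),
      (∀ i, f i ∈ C) ∧ IsMLP L k M ∧ ∀ x, h x = M (fun i => f i x) }

open Set Submodule

def ramp (μ : ℝ) : C(ℝ, ℝ) := ⟨fun t => max (t - μ) 0, by fun_prop⟩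

def reluSpan : Submodule ℝ C(ℝ, ℝ) := span ℝ (insert 1 (range ramp))

section MLPClassTwo

variable {X : Type*} (C : Set (X → ℝ))

theorem mem_mlpClass_two_iff {h : X → ℝ} :
    h ∈ MLPClass 2 C ↔ ∃ (k m : ℕ) (f : Fin k → X → ℝ) (W : Matrix (Fin m) (Fin k) ℝ)
      (b w : Fin m → ℝ) (c : ℝ), (∀ i, f i ∈ C) ∧
        ∀ x, h x = ∑ j, w j * max (W.mulVec (fun i => f i x) j + b j) 0 + c := by
  constructor
  · rintro ⟨k, f, M, hf, ⟨m, W, b, M', ⟨w, c, rfl⟩, rfl⟩, hM⟩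
    exact ⟨k, m, f, W, b, w, c, hf, hM⟩
  · rintro ⟨k, m, f, W, b, w, c, hf, hh⟩
    exact ⟨k, f, _, hf, ⟨m, W, b, _, ⟨w, c, rfl⟩, rfl⟩, hh⟩

theorem add_mem_mlpClass_two {h₁ h₂ : X → ℝ} (h₁_mem : h₁ ∈ MLPClass 2 C)
    (h₂_mem : h₂ ∈ MLPClass 2 C) : h₁ + h₂ ∈ MLPClass 2 C := by
  rw [mem_mlpClass_two_iff] at *
  obtain ⟨k₁, m₁, f₁, W₁, b₁, w₁, c₁, hf₁, hh₁⟩ := h₁_mem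
  obtain ⟨k₂, m₂, f₂, W₂, b₂, w₂, c₂, hf₂, hh₂⟩ := h₂_mem
  refine ⟨k₁ + k₂, m₁ + m₂, Fin.append f₁ f₂,
    Matrix.of (Fin.append (fun j => Fin.append (W₁ j) 0) (fun j => Fin.append 0 (W₂ j))),
    Fin.append b₁ b₂, Fin.append w₁ w₂, c₁ + c₂, fun i => ?_, fun x => ?_⟩
  · refine Fin.addCases (fun i => ?_) (fun i => ?_) i <;> simp [hf₁, hf₂]
  · simp only [Pi.add_apply, hh₁, hh₂, Matrix.mulVec, dotProduct, Matrix.of_apply,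
      Fin.sum_univ_add, Fin.append_left, Fin.append_right, Pi.zero_apply, zero_mul,
      Finset.sum_const_zero, add_zero, zero_add]
    ring

theorem const_mem_mlpClass_two (c : ℝ) : (fun _ => c) ∈ MLPClass 2 C :=
  (mem_mlpClass_two_iff C).2 ⟨0, 0, Fin.elim0, 0, 0, 0, c, fun i => i.elim0, by simp⟩

theorem smul_mem_mlpClass_two (a : ℝ) {h : X → ℝ} (h_mem : h ∈ MLPClass 2 C) :
    a • h ∈ MLPClass 2 C := by
  rw [mem_mlpClass_two_iff] at *
  obtain ⟨k, m, f, W, b, w, c, hf, hh⟩ := h_mem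
  refine ⟨k, m, f, W, b, a • w, a * c, hf, fun x => ?_⟩
  simp [hh, mul_add, Finset.mul_sum, mul_assoc]

theorem ramp_comp_mem_mlpClass_two {q : X → ℝ} (hq : q ∈ span ℝ C) (μ : ℝ) :
    ramp μ ∘ q ∈ MLPClass 2 C := by
  obtain ⟨k, a, f, rfl⟩ := mem_span_set'.1 hq
  refine (mem_mlpClass_two_iff C).2
    ⟨k, 1, fun i => f i, Matrix.of fun _ => a, fun _ => -μ, 1, 0, fun i => (f i).2, fun x => ?_⟩
  simp [ramp, Matrix.mulVec, dotProduct, Finset.sum_apply, sub_eq_add_neg]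

def mlpClassTwoSubmodule : Submodule ℝ (X → ℝ) where
  carrier := MLPClass 2 C
  add_mem' := add_mem_mlpClass_two C
  zero_mem' := const_mem_mlpClass_two C 0
  smul_mem' := smul_mem_mlpClass_two C

end MLPClassTwo

theorem comp_mem_mlpClass_two {X : Type*} {C : Set (X → ℝ)} {φ : C(ℝ, ℝ)} (hφ : φ ∈ reluSpan)
    {q : X → ℝ} (hq : q ∈ span ℝ C) : φ ∘ q ∈ MLPClass 2 C := by
  induction hφ using Submodule.span_induction with
  | mem φ hφ =>
    rcases hφ with rfl | ⟨μ, rfl⟩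
    · exact const_mem_mlpClass_two C 1
    · exact ramp_comp_mem_mlpClass_two C hq μ
  | zero => exact const_mem_mlpClass_two C 0
  | add φ ψ _ _ hφ hψ => exact add_mem_mlpClass_two C hφ hψ
  | smul a φ _ hφ => exact smul_mem_mlpClass_two C a hφ

-- The affine tail beyond `b` is the invariant that lets one more ramp at `b` extend the
-- approximation to the right.
def ReluApproxUpTo (g : ℝ → ℝ) (ε a b : ℝ) : Prop :=
  ∃ φ ∈ reluSpan, ∃ m : ℝ,
    (∀ t, b ≤ t → φ t = g b + m * (t - b)) ∧ ∀ t ∈ Icc a b, |g t - φ t| ≤ ε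

theorem reluApproxUpTo_self (g : ℝ → ℝ) {ε : ℝ} (hε : 0 ≤ ε) (a : ℝ) :
    ReluApproxUpTo g ε a a := by
  refine ⟨g a • 1, smul_mem _ _ (subset_span (mem_insert _ _)), 0, fun t _ => by simp, ?_⟩
  rintro t ⟨hat, hta⟩
  simp [le_antisymm hta hat, hε]

theorem ReluApproxUpTo.extend {g : ℝ → ℝ} {ε a b b' : ℝ} (h : ReluApproxUpTo g ε a b)
    (hbb' : b < b') (hosc : ∀ t ∈ Icc b b', |g t - g b| ≤ ε ∧ |g t - g b'| ≤ ε) :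
    ReluApproxUpTo g ε a b' := by
  obtain ⟨φ, hφ, m, haffine, hnear⟩ := h
  obtain ⟨m', hm'⟩ : ∃ m' : ℝ, g b' = g b + m' * (b' - b) :=
    ⟨(g b' - g b) / (b' - b), by field_simp [sub_ne_zero.2 hbb'.ne']; ring⟩
  have hramp : ramp b ∈ reluSpan := subset_span (mem_insert_of_mem _ ⟨b, rfl⟩)
  have hval : ∀ t, b ≤ t → (φ + (m' - m) • ramp b) t = g b + m' * (t - b) := by
    intro t hbt
    simp only [ramp, ContinuousMap.add_apply, haffine t hbt, ContinuousMap.coe_smul,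
      ContinuousMap.coe_mk, Pi.smul_apply, max_eq_left (sub_nonneg.2 hbt), smul_eq_mul]
    ring
  refine ⟨φ + (m' - m) • ramp b, add_mem hφ (smul_mem _ _ hramp), m', fun t hbt => ?_, ?_⟩
  · rw [hval t (hbb'.le.trans hbt), hm']
    ring
  rintro t ⟨hat, htb'⟩
  rcases le_total t b with htb | hbt
  · simpa [ramp, max_eq_right (sub_nonpos.2 htb)] using hnear t ⟨hat, htb⟩
  -- on `[b, b']` the approximant is the chord of `g`, a convex combination of `g b` and `g b'`
  have hchord : AffineMap.lineMap (g b) (g b') ((t - b) / (b' - b)) ∈ Metric.closedBall (g t) ε :=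
    (convex_closedBall _ _).lineMap_mem
      (by simpa [Real.dist_eq, abs_sub_comm] using (hosc t ⟨hbt, htb'⟩).1)
      (by simpa [Real.dist_eq, abs_sub_comm] using (hosc t ⟨hbt, htb'⟩).2)
      ⟨div_nonneg (by linarith) (by linarith), div_le_one_of_le₀ (by linarith) (by linarith)⟩
  rw [hval t hbt]
  rw [Metric.mem_closedBall, Real.dist_eq, AffineMap.lineMap_apply_module, abs_sub_comm] at hchord
  convert hchord using 3
  rw [hm', smul_eq_mul, smul_eq_mul]
  field_simp [sub_ne_zero.2 hbb'.ne']
  ring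

theorem exists_mem_reluSpan_near_of_uniformContinuous {g : ℝ → ℝ} (hg : UniformContinuous g)
    (A B : ℝ) {ε : ℝ} (hε : 0 < ε) : ∃ φ ∈ reluSpan, ∀ t ∈ Icc A B, |g t - φ t| ≤ ε := by
  obtain ⟨δ, hδ, hgδ⟩ := Metric.uniformContinuous_iff.1 hg ε hε
  have hosc : ∀ b, ∀ t ∈ Icc b (b + δ / 2), |g t - g b| ≤ ε ∧ |g t - g (b + δ / 2)| ≤ ε := by
    rintro b t ⟨hbt, htb⟩
    constructor <;> refine (hgδ ?_).le <;> rw [Real.dist_eq, abs_lt] <;> constructor <;> linarith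
  have happrox : ∀ n : ℕ, ReluApproxUpTo g ε A (A + n * (δ / 2)) := by
    intro n
    induction n with
    | zero => simpa using reluApproxUpTo_self g hε.le A
    | succ n ih =>
      simpa [add_mul, add_assoc] using ih.extend (by linarith) (hosc _)
  obtain ⟨n, hn⟩ := exists_nat_ge ((B - A) / (δ / 2))
  obtain ⟨φ, hφ, -, -, hnear⟩ := happrox n
  have hB : B ≤ A + n * (δ / 2) := by
    rw [div_le_iff₀ (by positivity)] at hn
    linarith
  exact ⟨φ, hφ, fun t ht => hnear t ⟨ht.1, ht.2.trans hB⟩⟩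

theorem exists_mem_reluSpan_near {g : ℝ → ℝ} (hg : Continuous g) (A B : ℝ) {ε : ℝ}
    (hε : 0 < ε) : ∃ φ ∈ reluSpan, ∀ t ∈ Icc A B, |g t - φ t| ≤ ε := by
  rcases lt_or_ge B A with hBA | hAB
  · exact ⟨0, zero_mem _, by simp [Icc_eq_empty_of_lt hBA]⟩
  have hext : UniformContinuous (IccExtend hAB fun x : Icc A B => g x) :=
    (CompactSpace.uniformContinuous_of_continuous (hg.comp continuous_subtype_val)).comp
      (LipschitzWith.projIcc hAB).uniformContinuous
  obtain ⟨φ, hφ, hnear⟩ := exists_mem_reluSpan_near_of_uniformContinuous hext A B hε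
  exact ⟨φ, hφ, fun t ht => by simpa [IccExtend_of_mem hAB _ ht] using hnear t ht⟩

theorem ContinuousMap.mem_subalgebra_closure_of_separates_fibers {X : Type*} [TopologicalSpace X]
    [CompactSpace X] (A : Subalgebra ℝ C(X, ℝ)) (f : C(X, ℝ))
    (hf : ∀ x y, f x ≠ f y → ∃ a ∈ A, a x ≠ a y) : f ∈ A.topologicalClosure := by
  -- `A` separates the points of the quotient of `X` by the fibres of `x ↦ (a x)_{a ∈ A}`
  let s : Setoid X := Setoid.ker fun x (a : A) => (a : C(X, ℝ)) x
  let π : C(X, Quotient s) := ⟨Quotient.mk s, continuous_quotient_mk'⟩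
  let descend (g : C(X, ℝ)) (hg : ∀ x y, s x y → g x = g y) : C(Quotient s, ℝ) :=
    ⟨Quotient.lift g hg, g.continuous.quotient_lift hg⟩
  let A' := A.comap (compRightAlgHom ℝ ℝ π)
  have hsep : A'.SeparatesPoints := by
    rintro ⟨x⟩ ⟨y⟩ hxy
    obtain ⟨a, ha⟩ : ∃ a : A, (a : C(X, ℝ)) x ≠ (a : C(X, ℝ)) y := by
      by_contra! h
      exact hxy (Quotient.sound (funext h))
    exact ⟨_, ⟨descend a fun x y hxy => congr_fun hxy a, a.2, rfl⟩, ha⟩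
  have hf_desc : ∀ x y, s x y → f x = f y := fun x y hxy => by
    by_contra hne
    obtain ⟨a, ha, hne⟩ := hf x y hne
    exact hne (congr_fun hxy ⟨a, ha⟩)
  rw [← SetLike.mem_coe, Subalgebra.topologicalClosure_coe]
  exact map_mem_closure (compRightAlgHom_continuous ℝ ℝ π)
    (continuousMap_mem_subalgebra_closure_of_separatesPoints A' hsep (descend f hf_desc))
    fun _ hg => hg

section Closure

variable {X : Type*} [TopologicalSpace X] (C : Set (X → ℝ))

def continuousMLPClassTwo : Submodule ℝ C(X, ℝ) :=
  (mlpClassTwoSubmodule C).comap (ContinuousMap.coeFnLinearMap ℝ)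

theorem comp_mem_closure_continuousMLPClassTwo [CompactSpace X] (g : C(ℝ, ℝ)) {q : C(X, ℝ)}
    (hq : ⇑q ∈ span ℝ C) : g.comp q ∈ (continuousMLPClassTwo C).topologicalClosure := by
  rw [← SetLike.mem_coe, Submodule.topologicalClosure_coe, Metric.mem_closure_iff]
  intro ε hε
  obtain ⟨φ, hφ, hnear⟩ := exists_mem_reluSpan_near g.continuous (-‖q‖) ‖q‖ (half_pos hε)
  refine ⟨φ.comp q, comp_mem_mlpClass_two hφ hq, ?_⟩
  refine ((ContinuousMap.dist_le (half_pos hε).le).2 fun x => ?_).trans_lt (half_lt_self hε)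
  rw [Real.dist_eq]
  exact hnear (q x) (abs_le.1 (by simpa using q.norm_coe_le_norm x))

def expSubmonoid : Submonoid C(X, ℝ) where
  carrier := {φ | ∃ q : C(X, ℝ), ⇑q ∈ span ℝ C ∧
    φ = (⟨Real.exp, Real.continuous_exp⟩ : C(ℝ, ℝ)).comp q}
  mul_mem' := by
    rintro _ _ ⟨q₁, hq₁, rfl⟩ ⟨q₂, hq₂, rfl⟩
    exact ⟨q₁ + q₂, add_mem hq₁ hq₂, by ext; simp [Real.exp_add]⟩
  one_mem' := ⟨0, zero_mem _, by ext; simp⟩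

theorem topologicalClosure_adjoin_expSubmonoid_subset [CompactSpace X] :
    ((Algebra.adjoin ℝ (expSubmonoid C : Set C(X, ℝ))).topologicalClosure : Set C(X, ℝ)) ⊆
      (continuousMLPClassTwo C).topologicalClosure := by
  rw [Subalgebra.topologicalClosure_coe]
  refine closure_minimal (fun p hp => ?_) (isClosed_topologicalClosure _)
  rw [SetLike.mem_coe, ← Subalgebra.mem_toSubmodule, Algebra.adjoin_eq_span,
    Submonoid.closure_eq] at hp
  refine span_le.2 ?_ hp
  rintro _ ⟨q, hq, rfl⟩
  exact comp_mem_closure_continuousMLPClassTwo C _ hq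

end Closure

theorem GInvariant.eq_of_sameOrbit {G X : Type*} [Group G] [MulAction G X] {f : X → ℝ}
    (hf : GInvariant G f) {x y : X} (hxy : SameOrbit G x y) : f x = f y := by
  obtain ⟨g, rfl⟩ := hxy
  exact (hf g x).symm

theorem pairwise_discriminating_implies_plus_two_universal_continuous_general
    {G X : Type*} [Group G]
    [MetricSpace X] [CompactSpace X] [MulAction G X]
    (C : Set (X → ℝ))
    (hCont : ∀ h ∈ C, Continuous h)
    (hDisc : ∀ x₁ x₂ : X, ¬ SameOrbit G x₁ x₂ → ∃ h ∈ C, h x₁ ≠ h x₂) :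
    ∀ f : X → ℝ, Continuous f → GInvariant G f →
      ∀ ε > (0 : ℝ), ∃ h ∈ MLPClass 2 C, ∀ x : X, |f x - h x| < ε := by
  intro f hf hfInv ε hε
  let F : C(X, ℝ) := ⟨f, hf⟩
  have hsep : ∀ x y, F x ≠ F y →
      ∃ a ∈ Algebra.adjoin ℝ (expSubmonoid C : Set C(X, ℝ)), a x ≠ a y := by
    intro x y hxy
    obtain ⟨h, hC, hne⟩ := hDisc x y fun horb => hxy (hfInv.eq_of_sameOrbit horb)
    exact ⟨_, Algebra.subset_adjoin ⟨⟨h, hCont h hC⟩, subset_span hC, rfl⟩,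
      fun heq => hne (Real.exp_injective heq)⟩
  have hF := topologicalClosure_adjoin_expSubmonoid_subset C
    (F.mem_subalgebra_closure_of_separates_fibers _ hsep)
  rw [Submodule.topologicalClosure_coe] at hF
  obtain ⟨p, hp, hFp⟩ := Metric.mem_closure_iff.1 hF ε hε
  exact ⟨p, hp, fun x => by
    simpa [F, Real.dist_eq] using (ContinuousMap.dist_apply_le_dist (g := p) x).trans_lt hFp⟩

/-- Let `X` be a compact metric space and `G` a compact topological group acting
continuously on `X`.  If `C` is a collection of continuous `G`-invariant functions from
`X` to `ℝ` that is pairwise `X_G` discriminating, then the class `C^{+2}` can universally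
approximate every continuous `G`-invariant function on `X`. -/
theorem pairwise_discriminating_implies_plus_two_universal_continuous
    {G X : Type*} [Group G] [TopologicalSpace G] [IsTopologicalGroup G] [CompactSpace G]
    [MetricSpace X] [CompactSpace X] [MulAction G X] [ContinuousSMul G X]
    (C : Set (X → ℝ))
    (hCont : ∀ h ∈ C, Continuous h)
    (hInv : ∀ h ∈ C, GInvariant G h)
    (hDisc : ∀ x₁ x₂ : X, ¬ SameOrbit G x₁ x₂ → ∃ h ∈ C, h x₁ ≠ h x₂) :
    ∀ f : X → ℝ, Continuous f → GInvariant G f →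
      ∀ ε > (0 : ℝ), ∃ h ∈ MLPClass 2 C, ∀ x : X, |f x - h x| < ε :=
  pairwise_discriminating_implies_plus_two_universal_continuous_general C hCont hDisc
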